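/- Define, for T, x₁, x₂ > 0, h_T(x₁,x₂) = 2 arccosh(cosh(x₁/2)cosh(x₂/2) + cosh(T) sinh(x₁/2)sinh(x₂/2)), and let 𝔇 = {(T,x₁,x₂) ∈ (0,∞)³ : cosh(T) sinh(x₁/2)sinh(x₂/2) − cosh(x₁/2)cosh(x₂/2) > 1}. Then for every measurable function F : ℝ → [0,∞], one has the change-of-variables identity ∫_{(0,∞)³} F(𝔏₈(x₁,x₂,x₃)) sinh(x₁/2)sinh(x₂/2)sinh(x₃/2) dx₁ dx₂ dx₃ = 2 ∫_𝔇 F(h_T(x₁,x₂)) sinh²(x₁/2) sinh²(x₂/2) sinh(T) dT dx₁ dx₂. -/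

import Mathlib

open MeasureTheory Real Set
open scoped ENNReal

noncomputable section

/-- Inverse hyperbolic cosine: `arcosh y = log (y + √(y² − 1))`. -/
def arcosh (y : ℝ) : ℝ := Real.log (y + Real.sqrt (y ^ 2 - 1))

/-- The figure-eight length function
`𝔏₈(x₁,x₂,x₃) = 2 arcosh(2 cosh(x₁/2)cosh(x₂/2) + cosh(x₃/2))`. -/
def L8 (x₁ x₂ x₃ : ℝ) : ℝ :=
  2 * _root_.arcosh (2 * Real.cosh (x₁ / 2) * Real.cosh (x₂ / 2) + Real.cosh (x₃ / 2))

/-- `h_T(x₁,x₂) = 2 arcosh(cosh(x₁/2)cosh(x₂/2) + cosh(T) sinh(x₁/2)sinh(x₂/2))`. -/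
def hT (T x₁ x₂ : ℝ) : ℝ :=
  2 * _root_.arcosh (Real.cosh (x₁ / 2) * Real.cosh (x₂ / 2)
    + Real.cosh T * Real.sinh (x₁ / 2) * Real.sinh (x₂ / 2))

/-- The domain `𝔇` of the coordinates `(T, x₁, x₂)`. -/
def frakD : Set (ℝ × ℝ × ℝ) :=
  {p : ℝ × ℝ × ℝ | 0 < p.1 ∧ 0 < p.2.1 ∧ 0 < p.2.2 ∧
    1 < Real.cosh p.1 * Real.sinh (p.2.1 / 2) * Real.sinh (p.2.2 / 2)
      - Real.cosh (p.2.1 / 2) * Real.cosh (p.2.2 / 2)}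

/-! Both length functions factor through the single variable
`u ↦ 2 arcosh (2 cosh (x₁/2) cosh (x₂/2) + u)`: for `𝔏₈` one has `u = cosh (x₃/2)`,
for `h_T` one has `u = sinh (x₁/2) sinh (x₂/2) cosh T - cosh (x₁/2) cosh (x₂/2)`.
Fixing `x₁, x₂ > 0`, each of the two substitutions carries the fibre measure
(`sinh (x₃/2) dx₃`, resp. `sinh T dT` restricted to `𝔇`) onto a constant multiple of `du`
on `(1, ∞)`; the constants `2 sinh (x₁/2) sinh (x₂/2)` and `sinh (x₁/2) sinh (x₂/2)` account
for the factor `2`. Tonelli assembles the fibres. -/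

@[fun_prop]
lemma measurable_arcosh : Measurable _root_.arcosh := by
  unfold _root_.arcosh; fun_prop

lemma strictMonoOn_mul_cosh_mul_sub {a S : ℝ} (ha : 0 < a) (hS : 0 < S) (C : ℝ) :
    StrictMonoOn (fun x => S * cosh (a * x) - C) (Ioi 0) := by
  intro x hx y hy hxy
  have hcosh := cosh_strictMonoOn (mul_nonneg ha.le (le_of_lt hx))
    (mul_nonneg ha.le (le_of_lt hy)) (mul_lt_mul_of_pos_left hxy ha)
  exact sub_lt_sub_right (mul_lt_mul_of_pos_left hcosh hS) C

lemma image_mul_cosh_mul_sub_Ioi {a S : ℝ} (ha : 0 < a) (hS : 0 < S) (C : ℝ) :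
    (fun x => S * cosh (a * x) - C) '' Ioi 0 = Ioi (S - C) := by
  have hcosh : cosh '' Ioi 0 = Ioi 1 := coshOpenPartialHomeomorph.image_source_eq_target
  have haff : (fun u => S * u - C) '' Ioi 1 = Ioi (S - C) := by
    ext v
    simp only [mem_image, mem_Ioi]
    refine ⟨fun ⟨u, hu, hv⟩ => hv ▸ by nlinarith, fun hv => ⟨(v + C) / S, ?_, ?_⟩⟩
    · rw [lt_div_iff₀ hS]; linarith
    · field_simp; ring
  calc (fun x => S * cosh (a * x) - C) '' Ioi 0
      = (fun u => S * u - C) '' (cosh '' ((a * ·) '' Ioi 0)) := by simp only [image_image]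
    _ = Ioi (S - C) := by rw [image_const_mul_Ioi_zero ha, hcosh, haff]

theorem lintegral_Ioi_comp_mul_cosh_mul_sub (g : ℝ → ℝ≥0∞) {a S : ℝ} (ha : 0 < a) (hS : 0 < S)
    (C : ℝ) :
    ∫⁻ x in Ioi 0, g (S * cosh (a * x) - C) * ENNReal.ofReal (S * a * sinh (a * x))
      = ∫⁻ u in Ioi (S - C), g u := by
  have hderiv : ∀ x ∈ Ioi (0 : ℝ), HasDerivWithinAt (fun x => S * cosh (a * x) - C)
      (S * a * sinh (a * x)) (Ioi 0) x := fun x _ =>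
    ((((hasDerivAt_id' x).const_mul a).cosh.const_mul S).sub_const C
      |>.congr_deriv (by ring)).hasDerivWithinAt
  rw [← image_mul_cosh_mul_sub_Ioi ha hS C, lintegral_image_eq_lintegral_abs_deriv_mul
    measurableSet_Ioi hderiv (strictMonoOn_mul_cosh_mul_sub ha hS C).injOn]
  refine setLIntegral_congr_fun measurableSet_Ioi fun x hx => ?_
  have hsinh : 0 < sinh (a * x) := sinh_pos_iff.mpr (mul_pos ha hx)
  rw [abs_of_pos (by positivity), mul_comm]

theorem lintegral_prod_prod_eq_lintegral_prod_lintegral {α β γ : Type*} [MeasurableSpace α]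
    [MeasurableSpace β] [MeasurableSpace γ] (μ : Measure α) (ν : Measure β) (τ : Measure γ)
    [SFinite μ] [SFinite ν] [SFinite τ] {f : α × β × γ → ℝ≥0∞} (hf : Measurable f) :
    ∫⁻ p, f p ∂(μ.prod (ν.prod τ)) = ∫⁻ q, ∫⁻ z, f (q.1, q.2, z) ∂τ ∂(μ.prod ν) := by
  rw [← (measurePreserving_prodAssoc μ ν τ).lintegral_comp_emb
    MeasurableEquiv.prodAssoc.measurableEmbedding]
  exact lintegral_prod _ (hf.comp MeasurableEquiv.prodAssoc.measurable).aemeasurable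

def L8Profile (x₁ x₂ u : ℝ) : ℝ :=
  2 * _root_.arcosh (2 * cosh (x₁ / 2) * cosh (x₂ / 2) + u)

lemma L8_eq_L8Profile (x₁ x₂ x₃ : ℝ) : L8 x₁ x₂ x₃ = L8Profile x₁ x₂ (cosh (x₃ / 2)) := rfl

lemma hT_eq_L8Profile (T x₁ x₂ : ℝ) :
    hT T x₁ x₂ = L8Profile x₁ x₂
      (sinh (x₁ / 2) * sinh (x₂ / 2) * cosh T - cosh (x₁ / 2) * cosh (x₂ / 2)) := by
  unfold hT L8Profile
  ring_nf

lemma lintegral_L8_fiber (F : ℝ → ℝ≥0∞) (x₁ x₂ : ℝ) :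
    ∫⁻ x₃ in Ioi 0, F (L8 x₁ x₂ x₃) *
        ENNReal.ofReal (sinh (x₁ / 2) * sinh (x₂ / 2) * sinh (x₃ / 2))
      = 2 * ENNReal.ofReal (sinh (x₁ / 2) * sinh (x₂ / 2)) *
          ∫⁻ u in Ioi 1, F (L8Profile x₁ x₂ u) := by
  have hsubst := lintegral_Ioi_comp_mul_cosh_mul_sub (fun u => F (L8Profile x₁ x₂ u))
    (one_half_pos (α := ℝ)) one_pos 0
  rw [sub_zero] at hsubst
  rw [← hsubst, ← lintegral_const_mul' _ _ (by finiteness)]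
  refine setLIntegral_congr_fun measurableSet_Ioi fun x hx => ?_
  have hsinh : 0 ≤ sinh (x / 2) := sinh_nonneg_iff.mpr (by linarith [mem_Ioi.mp hx])
  simp only [one_mul, sub_zero, one_div_mul_eq_div, L8_eq_L8Profile]
  rw [mul_left_comm, ← ENNReal.ofReal_ofNat 2, ← ENNReal.ofReal_mul zero_le_two,
    ← ENNReal.ofReal_mul' (by positivity)]
  congr 2
  ring

lemma lintegral_hT_fiber (F : ℝ → ℝ≥0∞) {x₁ x₂ : ℝ} (h₁ : 0 < x₁) (h₂ : 0 < x₂) :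
    ∫⁻ T in Ioi 0,
        {T | 1 < cosh T * sinh (x₁ / 2) * sinh (x₂ / 2) - cosh (x₁ / 2) * cosh (x₂ / 2)}.indicator
          (fun T => F (hT T x₁ x₂) *
            ENNReal.ofReal (sinh (x₁ / 2) ^ 2 * sinh (x₂ / 2) ^ 2 * sinh T)) T
      = ENNReal.ofReal (sinh (x₁ / 2) * sinh (x₂ / 2)) *
          ∫⁻ u in Ioi 1, F (L8Profile x₁ x₂ u) := by
  set S := sinh (x₁ / 2) * sinh (x₂ / 2)
  set C := cosh (x₁ / 2) * cosh (x₂ / 2)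
  have hS : 0 < S := mul_pos (sinh_pos_iff.mpr (half_pos h₁)) (sinh_pos_iff.mpr (half_pos h₂))
  -- `S - C = -cosh ((x₁ - x₂) / 2)`, so `u = S cosh T - C` covers `(1, ∞)` and `𝔇` becomes `u > 1`.
  have hSC : S - C ≤ 1 := by
    have := cosh_sub (x₁ / 2) (x₂ / 2)
    linarith [one_le_cosh (x₁ / 2 - x₂ / 2)]
  calc _ = ∫⁻ T in Ioi 0, ENNReal.ofReal S *
          ((Ioi 1).indicator (fun u => F (L8Profile x₁ x₂ u)) (S * cosh (1 * T) - C) *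
            ENNReal.ofReal (S * 1 * sinh (1 * T))) := by
        refine setLIntegral_congr_fun measurableSet_Ioi fun T _ => ?_
        have hcosh : cosh T * sinh (x₁ / 2) * sinh (x₂ / 2) = S * cosh T := by ring
        simp only [one_mul, mul_one, indicator_apply, mem_ofPred_eq, mem_Ioi, hcosh]
        split_ifs
        · rw [hT_eq_L8Profile, mul_left_comm, ← ENNReal.ofReal_mul hS.le]
          congr 2
          ring
        · rw [zero_mul, mul_zero]
    _ = ENNReal.ofReal S *
          ∫⁻ u in Ioi (S - C), (Ioi 1).indicator (fun u => F (L8Profile x₁ x₂ u)) u := by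
        rw [lintegral_const_mul' _ _ (by finiteness),
          lintegral_Ioi_comp_mul_cosh_mul_sub _ one_pos hS]
    _ = _ := by
        rw [setLIntegral_indicator measurableSet_Ioi, inter_eq_left.mpr (Ioi_subset_Ioi hSC)]

/-- the change-of-variables identity expressing the pushforward of
`sinh(x₁/2)sinh(x₂/2)sinh(x₃/2) dx₁dx₂dx₃` under `𝔏₈` in the coordinates `(T,x₁,x₂)`. -/
theorem figure_eight_change_of_variables (F : ℝ → ℝ≥0∞) (hF : Measurable F) :
    (∫⁻ p in {p : ℝ × ℝ × ℝ | 0 < p.1 ∧ 0 < p.2.1 ∧ 0 < p.2.2},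
        F (L8 p.1 p.2.1 p.2.2) *
          ENNReal.ofReal (Real.sinh (p.1 / 2) * Real.sinh (p.2.1 / 2) * Real.sinh (p.2.2 / 2)))
      = 2 * ∫⁻ p in frakD,
          F (hT p.1 p.2.1 p.2.2) *
            ENNReal.ofReal (Real.sinh (p.2.1 / 2) ^ 2 * Real.sinh (p.2.2 / 2) ^ 2
              * Real.sinh p.1) := by
  set μ₀ := volume.restrict (Ioi (0 : ℝ))
  set W := {p : ℝ × ℝ × ℝ | 1 < cosh p.1 * sinh (p.2.1 / 2) * sinh (p.2.2 / 2)
    - cosh (p.2.1 / 2) * cosh (p.2.2 / 2)}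
  have hW : MeasurableSet W := measurableSet_lt measurable_const (by fun_prop)
  have hoctant : {p : ℝ × ℝ × ℝ | 0 < p.1 ∧ 0 < p.2.1 ∧ 0 < p.2.2}
      = Ioi 0 ×ˢ Ioi 0 ×ˢ Ioi 0 := by ext; simp
  have hfrakD : frakD = W ∩ Ioi 0 ×ˢ Ioi 0 ×ˢ Ioi 0 := by
    ext; simp only [frakD, W, mem_inter_iff, mem_prod, mem_Ioi, mem_ofPred_eq]; tauto
  have hquadrant : volume.restrict (Ioi 0 ×ˢ Ioi 0) = μ₀.prod μ₀ := by
    rw [Measure.volume_eq_prod, Measure.prod_restrict]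
  have hoctant_vol : volume.restrict (Ioi 0 ×ˢ Ioi 0 ×ˢ Ioi 0) = μ₀.prod (μ₀.prod μ₀) := by
    rw [Measure.volume_eq_prod, ← hquadrant, Measure.prod_restrict]
  rw [hoctant, hoctant_vol, lintegral_prod_prod_eq_lintegral_prod_lintegral _ _ _
      (by unfold L8; fun_prop), hfrakD, ← Measure.restrict_restrict hW,
    ← lintegral_indicator hW, hoctant_vol, lintegral_prod_symm' _
      ((by unfold hT; fun_prop : Measurable _).indicator hW),
    ← hquadrant, ← lintegral_const_mul' _ _ (by finiteness)]
  refine setLIntegral_congr_fun (measurableSet_Ioi.prod measurableSet_Ioi) fun q hq => ?_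
  rw [lintegral_L8_fiber, mul_assoc, ← lintegral_hT_fiber F hq.1 hq.2]
  rfl
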